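/- arXiv:2211.13682 — 2 statements merged into one kernel-verified Lean document; each statement's English description precedes it below -/
import Mathlib

section
/- Let m₁ be a positive integer and let ẋ₁ : ℝ → ℝ^{m₁}, F₁ : ℝ → ℝ^{m₁}, x_t : ℝ → ℝ be functions, with ẋ₁ and x_t differentiable and M : ℝ → Matrix (Fin m₁) (Fin m₁) ℝ differentiable, where M(t) is symmetric positive definite for every t. Suppose the admittance dynamics M(t)·ẍ₁(t) + D(t)·ẋ₁(t) = F₁(t) holds for every t, where D(t) is symmetric positive semidefinite and ẍ₁ denotes the derivative of ẋ₁. Define P_D(t) = ẋ₁(t)ᵀ D(t) ẋ₁(t) and P_M(t) = ½ ẋ₁(t)ᵀ Ṁ(t) ẋ₁(t), where Ṁ is the derivative of M. Suppose the tank state satisfies x_t(t)·ẋ_t(t) = φ(t)·P_D(t) − γ(t)·P_M(t) for every t, where φ(t) ∈ {0,1} for all t and γ : ℝ → ℝ satisfies, for every t, either γ(t) = 1 or (γ(t) = 0 and Ṁ(t) is negative semidefinite). Define the storage terms H₁(t) = ½ ẋ₁(t)ᵀ M(t) ẋ₁(t) and T(t) = ½ x_t(t)². Then for every t ≥ 0,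 ∫₀ᵗ ẋ₁(τ)ᵀ F₁(τ) dτ ≥ −H₁(0) − T(0), i.e. the tank-augmented variable admittance system is passive with respect to the pair (F₁, ẋ₁). (All integrands are assumed continuous.) -/
/-!
The storage function is `S = H₁ + T`, kinetic energy of the admittance plus tank energy.
Along trajectories the admittance satisfies the power balance `Ḣ₁ = ẋ₁ᵀF₁ - P_D + P_M`
(the symmetry of `M` turns the two cross terms of `d/dt (ẋ₁ᵀMẋ₁)` into `2 ẋ₁ᵀMẍ₁`), and the tank
law gives `Ṫ = φ P_D - γ P_M`, so `Ṡ = ẋ₁ᵀF₁ - (1 - φ) P_D + (1 - γ) P_M ≤ ẋ₁ᵀF₁`: the tank only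
declines to absorb dissipated power, and it only refuses to pay for a change of inertia when
`Ṁ ⪯ 0`, i.e. when that power `P_M` is nonpositive. Integrating the dissipation inequality
and using `S ≥ 0` gives passivity.
-/

open Matrix

section

variable {n : Type*} [Fintype n]

theorem Matrix.IsSymm.dotProduct_mulVec_comm {R : Type*} [CommSemiring R] {A : Matrix n n R}
    (hA : A.IsSymm) (v w : n → R) : v ⬝ᵥ A *ᵥ w = w ⬝ᵥ A *ᵥ v := by
  rw [dotProduct_mulVec, ← mulVec_transpose, hA.eq, dotProduct_comm]

variable {t : ℝ}

theorem HasDerivAt.dotProduct {u w : ℝ → n → ℝ} {u' w' : n → ℝ}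
    (hu : HasDerivAt u u' t) (hw : HasDerivAt w w' t) :
    HasDerivAt (fun s => u s ⬝ᵥ w s) (u' ⬝ᵥ w t + u t ⬝ᵥ w') t := by
  have h := HasDerivAt.fun_sum (u := Finset.univ) fun i _ =>
    (hasDerivAt_pi.mp hu i).fun_mul (hasDerivAt_pi.mp hw i)
  exact h.congr_deriv Finset.sum_add_distrib

theorem hasDerivAt_mulVec {A : ℝ → Matrix n n ℝ} {A' : Matrix n n ℝ} {w : ℝ → n → ℝ} {w' : n → ℝ}
    (hA : ∀ i j, HasDerivAt (fun s => A s i j) (A' i j) t) (hw : HasDerivAt w w' t) :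
    HasDerivAt (fun s => A s *ᵥ w s) (A' *ᵥ w t + A t *ᵥ w') t :=
  hasDerivAt_pi.mpr fun i => (hasDerivAt_pi.mpr (hA i)).dotProduct hw

theorem hasDerivAt_half_dotProduct_mulVec_of_isSymm {A : ℝ → Matrix n n ℝ} {A' : Matrix n n ℝ}
    {v : ℝ → n → ℝ} {v' : n → ℝ}
    (hA : ∀ i j, HasDerivAt (fun s => A s i j) (A' i j) t) (hsymm : (A t).IsSymm)
    (hv : HasDerivAt v v' t) :
    HasDerivAt (fun s => 1 / 2 * (v s ⬝ᵥ A s *ᵥ v s))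
      (v t ⬝ᵥ A t *ᵥ v' + 1 / 2 * (v t ⬝ᵥ A' *ᵥ v t)) t := by
  refine ((hv.dotProduct (hasDerivAt_mulVec hA hv)).const_mul (1 / 2 : ℝ)).congr_deriv ?_
  rw [hsymm.dotProduct_mulVec_comm v', dotProduct_add]
  ring

theorem hasDerivAt_admittance_energy {M : ℝ → Matrix n n ℝ} {M' D : Matrix n n ℝ}
    {v : ℝ → n → ℝ} {a F : n → ℝ}
    (hM : ∀ i j, HasDerivAt (fun s => M s i j) (M' i j) t) (hsymm : (M t).IsSymm)
    (hv : HasDerivAt v a t) (hdyn : M t *ᵥ a + D *ᵥ v t = F) :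
    HasDerivAt (fun s => 1 / 2 * (v s ⬝ᵥ M s *ᵥ v s))
      (v t ⬝ᵥ F - v t ⬝ᵥ D *ᵥ v t + 1 / 2 * (v t ⬝ᵥ M' *ᵥ v t)) t := by
  refine (hasDerivAt_half_dotProduct_mulVec_of_isSymm hM hsymm hv).congr_deriv ?_
  rw [← hdyn, dotProduct_add]
  ring

end

theorem tank_power_le_zero {φ γ P_D P_M : ℝ} (hφ : φ = 0 ∨ φ = 1) (hP_D : 0 ≤ P_D)
    (hγ : γ = 1 ∨ (γ = 0 ∧ P_M ≤ 0)) : -((1 - φ) * P_D) + (1 - γ) * P_M ≤ 0 := by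
  rcases hφ with rfl | rfl <;> rcases hγ with rfl | ⟨rfl, hP_M⟩ <;> linarith

theorem neg_le_integral_of_hasDerivAt_le {S S' p : ℝ → ℝ} {a b : ℝ} (hab : a ≤ b)
    (hS : ∀ t, HasDerivAt S (S' t) t) (hp : Continuous p) (hle : ∀ t, S' t ≤ p t)
    (hSb : 0 ≤ S b) : -S a ≤ ∫ t in a..b, p t := by
  have hS_cont : Continuous S := continuous_iff_continuousAt.2 fun t => (hS t).continuousAt
  have := intervalIntegral.sub_le_integral_of_hasDeriv_right_of_le hab hS_cont.continuousOn
    (fun t _ => (hS t).hasDerivWithinAt) hp.integrableOn_Icc (fun t _ => hle t)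
  linarith

theorem tank_admittance_passive_general
    (m₁ : ℕ)
    (x1' x1'' F₁ : ℝ → Fin m₁ → ℝ)
    (xt xt' : ℝ → ℝ)
    (M M' D : ℝ → Matrix (Fin m₁) (Fin m₁) ℝ)
    (φ γ : ℝ → ℝ)
    (hx1 : ∀ t, HasDerivAt x1' (x1'' t) t)
    (hxt : ∀ t, HasDerivAt xt (xt' t) t)
    (hM : ∀ t i j, HasDerivAt (fun s => M s i j) (M' t i j) t)
    (hMpd : ∀ t, (M t).PosDef)
    (hDpsd : ∀ t, (D t).PosSemidef)
    (hdyn : ∀ t, (M t).mulVec (x1'' t) + (D t).mulVec (x1' t) = F₁ t)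
    (htank : ∀ t, xt t * xt' t =
      φ t * (x1' t ⬝ᵥ (D t).mulVec (x1' t)) -
        γ t * ((1 : ℝ) / 2 * (x1' t ⬝ᵥ (M' t).mulVec (x1' t))))
    (hφ : ∀ t, φ t = 0 ∨ φ t = 1)
    (hγ : ∀ t, γ t = 1 ∨ (γ t = 0 ∧ (-(M' t)).PosSemidef))
    (hcont : Continuous fun t => x1' t ⬝ᵥ F₁ t) :
    ∀ t ≥ (0 : ℝ),
      (∫ τ in (0 : ℝ)..t, x1' τ ⬝ᵥ F₁ τ) ≥
        -((1 : ℝ) / 2 * (x1' 0 ⬝ᵥ (M 0).mulVec (x1' 0))) -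
          (1 : ℝ) / 2 * (xt 0) ^ 2 := by
  intro t ht
  have hH := fun s => hasDerivAt_admittance_energy (hM s)
    (isHermitian_iff_isSymm.mp (hMpd s).isHermitian) (hx1 s) (hdyn s)
  have hT : ∀ s, HasDerivAt (fun s => 1 / 2 * xt s ^ 2) (xt s * xt' s) s := fun s =>
    ((hxt s).pow 2).const_mul (1 / 2 : ℝ) |>.congr_deriv (by ring)
  refine Eq.trans_le (by ring) <|
    neg_le_integral_of_hasDerivAt_le ht (fun s => (hH s).fun_add (hT s)) hcont (fun s => ?_) ?_
  · have hP_D : 0 ≤ x1' s ⬝ᵥ D s *ᵥ x1' s := by simpa using (hDpsd s).dotProduct_mulVec_nonneg _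
    have hγ' : γ s = 1 ∨ (γ s = 0 ∧ 1 / 2 * (x1' s ⬝ᵥ M' s *ᵥ x1' s) ≤ 0) := by
      refine (hγ s).imp_right fun ⟨hγ0, hM'⟩ => ⟨hγ0, ?_⟩
      have := hM'.dotProduct_mulVec_nonneg (x1' s)
      simp only [star_trivial, neg_mulVec, dotProduct_neg, neg_nonneg] at this
      linarith
    rw [htank s]
    linarith [tank_power_le_zero (hφ s) hP_D hγ']
  · have hH_nonneg : 0 ≤ x1' t ⬝ᵥ M t *ᵥ x1' t := by
      simpa using (hMpd t).posSemidef.dotProduct_mulVec_nonneg _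
    positivity

/-- Proposition 1: passivity of the tank-based variable admittance controller
with respect to the pair `(F₁, ẋ₁)`. -/
theorem tank_admittance_passive
    (m₁ : ℕ) (hm₁ : 0 < m₁)
    (x1' x1'' F₁ : ℝ → Fin m₁ → ℝ)
    (xt xt' : ℝ → ℝ)
    (M M' D : ℝ → Matrix (Fin m₁) (Fin m₁) ℝ)
    (φ γ : ℝ → ℝ)
    (hx1 : ∀ t, HasDerivAt x1' (x1'' t) t)
    (hxt : ∀ t, HasDerivAt xt (xt' t) t)
    (hM : ∀ t i j, HasDerivAt (fun s => M s i j) (M' t i j) t)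
    (hMpd : ∀ t, (M t).PosDef)
    (hDpsd : ∀ t, (D t).PosSemidef)
    (hdyn : ∀ t, (M t).mulVec (x1'' t) + (D t).mulVec (x1' t) = F₁ t)
    (htank : ∀ t, xt t * xt' t =
      φ t * (x1' t ⬝ᵥ (D t).mulVec (x1' t)) -
        γ t * ((1 : ℝ) / 2 * (x1' t ⬝ᵥ (M' t).mulVec (x1' t))))
    (hφ : ∀ t, φ t = 0 ∨ φ t = 1)
    (hγ : ∀ t, γ t = 1 ∨ (γ t = 0 ∧ (-(M' t)).PosSemidef))
    (hcont : Continuous fun t => x1' t ⬝ᵥ F₁ t) :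
    ∀ t ≥ (0 : ℝ),
      (∫ τ in (0 : ℝ)..t, x1' τ ⬝ᵥ F₁ τ) ≥
        -((1 : ℝ) / 2 * (x1' 0 ⬝ᵥ (M 0).mulVec (x1' 0))) -
          (1 : ℝ) / 2 * (xt 0) ^ 2 :=
  tank_admittance_passive_general m₁ x1' x1'' F₁ xt xt' M M' D φ γ hx1 hxt hM hMpd hDpsd hdyn htank
    hφ hγ hcont
end

section
/- Let m₁, m₂ be positive integers. Let ẋ₁ : ℝ → ℝ^{m₁}, v₂ : ℝ → ℝ^{m₂}, F₁ : ℝ → ℝ^{m₁}, F_null : ℝ → ℝ^{m₂}, x_t : ℝ → ℝ, with ẋ₁, v₂, x_t differentiable and M : ℝ → Matrix (Fin m₁) (Fin m₁) ℝ differentiable with M(t) symmetric positive definite for every t. Suppose: (i) M(t)ẍ₁(t) + (D(t) + ψ(t)·I)ẋ₁(t) = F₁(t) for all t, where D(t) is symmetric positive semidefinite and ψ(t) ≥ 0; (ii) v̇₂(t) = −D_N(t)·v₂(t) + F_null(t) for all t, where D_N(t) is symmetric positive semidefinite; (iii) x_t(t)·ẋ_t(t) = φ(t)·(P_D(t) +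 P_N(t)) − γ(t)·P_M(t) for all t, where P_D(t) = ẋ₁(t)ᵀD(t)ẋ₁(t), P_N(t) = v₂(t)ᵀD_N(t)v₂(t), P_M(t) = ½ẋ₁(t)ᵀṀ(t)ẋ₁(t), φ(t) ∈ {0,1}, and for every t either γ(t) = 1 or (γ(t) = 0 and Ṁ(t) is negative semidefinite). Define H₁(t) = ½ẋ₁(t)ᵀM(t)ẋ₁(t), T(t) = ½x_t(t)², H₂(t) = ½v₂(t)ᵀv₂(t). Then for every t ≥ 0, ∫₀ᵗ (ẋ₁(τ)ᵀF₁(τ) + v₂(τ)ᵀF_null(τ)) dτ ≥ −H₁(0) − T(0) − H₂(0). (All integrands are assumed continuous.) -/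
/-!
The total stored energy `H₁ + T + H₂` is a storage function: along solutions its rate of change
is the supplied power minus the losses `(1 - φ)(P_D + P_N) + ψ |ẋ₁|²`, plus the inertia power
`(1 - γ) P_M` that the tank does not absorb. The losses are nonnegative and `(1 - γ) P_M ≤ 0`,
so integrating this dissipation inequality and dropping the nonnegative final energy gives
passivity.
-/

open Matrix

section Calculus

variable {𝕜 ι : Type*} [NontriviallyNormedField 𝕜] [Fintype ι] {t : 𝕜}

theorem HasDerivAt.dotProduct_s1 {x y : 𝕜 → ι → 𝕜} {x' y' : ι → 𝕜}
    (hx : HasDerivAt x x' t) (hy : HasDerivAt y y' t) :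
    HasDerivAt (fun s => x s ⬝ᵥ y s) (x' ⬝ᵥ y t + x t ⬝ᵥ y') t :=
  (HasDerivAt.fun_sum (u := Finset.univ) fun i _ =>
    (hasDerivAt_pi.1 hx i).fun_mul (hasDerivAt_pi.1 hy i)).congr_deriv Finset.sum_add_distrib

theorem HasDerivAt.mulVec {κ : Type*} {A : 𝕜 → Matrix κ ι 𝕜} {A' : Matrix κ ι 𝕜}
    {x : 𝕜 → ι → 𝕜} {x' : ι → 𝕜}
    (hx : HasDerivAt x x' t) (hA : ∀ i j, HasDerivAt (fun s => A s i j) (A' i j) t) :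
    HasDerivAt (fun s => A s *ᵥ x s) (A' *ᵥ x t + A t *ᵥ x') t :=
  hasDerivAt_pi.2 fun i => (hasDerivAt_pi.2 (hA i)).dotProduct_s1 hx

theorem HasDerivAt.dotProduct_mulVec_self {A : 𝕜 → Matrix ι ι 𝕜} {A' : Matrix ι ι 𝕜}
    {x : 𝕜 → ι → 𝕜} {x' : ι → 𝕜}
    (hx : HasDerivAt x x' t) (hA : ∀ i j, HasDerivAt (fun s => A s i j) (A' i j) t)
    (hsymm : (A t).IsSymm) :
    HasDerivAt (fun s => x s ⬝ᵥ A s *ᵥ x s) (2 * (x t ⬝ᵥ A t *ᵥ x') + x t ⬝ᵥ A' *ᵥ x t) t := by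
  have h := hx.dotProduct_s1 (hx.mulVec hA)
  have hcomm : x' ⬝ᵥ A t *ᵥ x t = x t ⬝ᵥ A t *ᵥ x' := by
    rw [← dotProduct_transpose_mulVec, hsymm.eq]
  refine h.congr_deriv ?_
  rw [dotProduct_add, hcomm]
  ring

end Calculus

theorem neg_le_integral_of_hasDerivAt_le_s1 {H E P : ℝ → ℝ} {a b : ℝ} (hab : a ≤ b)
    (hH : ∀ s, HasDerivAt H (E s) s) (hEP : ∀ s, E s ≤ P s)
    (hP : IntervalIntegrable P MeasureTheory.volume a b) (hHb : 0 ≤ H b) :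
    -H a ≤ ∫ s in a..b, P s := by
  have h := intervalIntegral.sub_le_integral_of_hasDeriv_right_of_le hab
    (fun s _ => (hH s).continuousAt.continuousWithinAt) (fun s _ => (hH s).hasDerivWithinAt)
    ((intervalIntegrable_iff_integrableOn_Icc_of_le hab).1 hP) (fun s _ => hEP s)
  linarith

theorem tank_power_le {φ γ P Q : ℝ} (hP : 0 ≤ P) (hφ : φ ≤ 1)
    (hγ : γ = 1 ∨ (γ = 0 ∧ Q ≤ 0)) : φ * P - γ * Q ≤ P - Q := by
  rcases hγ with rfl | ⟨rfl, hQ⟩ <;> nlinarith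

theorem admittance_power_balance {ι : Type*} [Fintype ι] [DecidableEq ι]
    {x x'' F : ι → ℝ} {M D : Matrix ι ι ℝ} {ψ : ℝ}
    (hdyn : M *ᵥ x'' + (D + ψ • (1 : Matrix ι ι ℝ)) *ᵥ x = F) :
    x ⬝ᵥ M *ᵥ x'' = x ⬝ᵥ F - x ⬝ᵥ D *ᵥ x - ψ * (x ⬝ᵥ x) := by
  rw [← hdyn, add_mulVec, smul_mulVec, one_mulVec]
  simp only [dotProduct_add, dotProduct_smul, smul_eq_mul]
  ring

theorem storage_rate_le_supplied_power {ι κ : Type*} [Fintype ι] [Fintype κ] [DecidableEq ι]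
    {x x'' F : ι → ℝ} {v v' Fn : κ → ℝ} {M M' D : Matrix ι ι ℝ} {DN : Matrix κ κ ℝ}
    {ψ φ γ z z' : ℝ} (hD : D.PosSemidef) (hDN : DN.PosSemidef) (hψ : 0 ≤ ψ)
    (hdyn1 : M *ᵥ x'' + (D + ψ • (1 : Matrix ι ι ℝ)) *ᵥ x = F)
    (hdyn2 : v' = -(DN *ᵥ v) + Fn)
    (htank : z * z' = φ * (x ⬝ᵥ D *ᵥ x + v ⬝ᵥ DN *ᵥ v) - γ * (1 / 2 * (x ⬝ᵥ M' *ᵥ x)))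
    (hφ : φ = 0 ∨ φ = 1) (hγ : γ = 1 ∨ (γ = 0 ∧ (-M').PosSemidef)) :
    x ⬝ᵥ M *ᵥ x'' + 1 / 2 * (x ⬝ᵥ M' *ᵥ x) + z * z' + v ⬝ᵥ v' ≤ x ⬝ᵥ F + v ⬝ᵥ Fn := by
  have hPD : 0 ≤ x ⬝ᵥ D *ᵥ x := by simpa using hD.dotProduct_mulVec_nonneg x
  have hPN : 0 ≤ v ⬝ᵥ DN *ᵥ v := by simpa using hDN.dotProduct_mulVec_nonneg v
  have hkin : 0 ≤ ψ * (x ⬝ᵥ x) := mul_nonneg hψ (by simpa using dotProduct_star_self_nonneg x)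
  have hnull : v ⬝ᵥ v' = v ⬝ᵥ Fn - v ⬝ᵥ DN *ᵥ v := by
    rw [hdyn2, dotProduct_add, dotProduct_neg]
    ring
  have hPM : γ = 1 ∨ (γ = 0 ∧ 1 / 2 * (x ⬝ᵥ M' *ᵥ x) ≤ 0) := by
    refine hγ.imp_right fun ⟨hγ0, hM'⟩ => ⟨hγ0, ?_⟩
    have h := hM'.dotProduct_mulVec_nonneg x
    rw [star_trivial, neg_mulVec, dotProduct_neg] at h
    linarith
  have htank_le := tank_power_le (add_nonneg hPD hPN)
    (by rcases hφ with rfl | rfl <;> norm_num : φ ≤ 1) hPM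
  rw [admittance_power_balance hdyn1, htank, hnull]
  linarith

theorem tank_admittance_nullspace_passive_general
    (m₁ m₂ : ℕ)
    (x1' x1'' F₁ : ℝ → Fin m₁ → ℝ)
    (v₂ v₂' Fnull : ℝ → Fin m₂ → ℝ)
    (xt xt' : ℝ → ℝ)
    (M M' D : ℝ → Matrix (Fin m₁) (Fin m₁) ℝ)
    (DN : ℝ → Matrix (Fin m₂) (Fin m₂) ℝ)
    (ψ φ γ : ℝ → ℝ)
    (hx1 : ∀ t, HasDerivAt x1' (x1'' t) t)
    (hv2 : ∀ t, HasDerivAt v₂ (v₂' t) t)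
    (hxt : ∀ t, HasDerivAt xt (xt' t) t)
    (hM : ∀ t i j, HasDerivAt (fun s => M s i j) (M' t i j) t)
    (hMpd : ∀ t, (M t).PosDef)
    (hDpsd : ∀ t, (D t).PosSemidef)
    (hDNpsd : ∀ t, (DN t).PosSemidef)
    (hψ : ∀ t, 0 ≤ ψ t)
    (hdyn1 : ∀ t, (M t).mulVec (x1'' t) +
      (D t + ψ t • (1 : Matrix (Fin m₁) (Fin m₁) ℝ)).mulVec (x1' t) = F₁ t)
    (hdyn2 : ∀ t, v₂' t = -(DN t).mulVec (v₂ t) + Fnull t)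
    (htank : ∀ t, xt t * xt' t =
      φ t * ((x1' t ⬝ᵥ (D t).mulVec (x1' t)) + (v₂ t ⬝ᵥ (DN t).mulVec (v₂ t))) -
        γ t * ((1 : ℝ) / 2 * (x1' t ⬝ᵥ (M' t).mulVec (x1' t))))
    (hφ : ∀ t, φ t = 0 ∨ φ t = 1)
    (hγ : ∀ t, γ t = 1 ∨ (γ t = 0 ∧ (-(M' t)).PosSemidef))
    (hcont : Continuous fun t => x1' t ⬝ᵥ F₁ t + v₂ t ⬝ᵥ Fnull t) :
    ∀ t ≥ (0 : ℝ),
      (∫ τ in (0 : ℝ)..t, (x1' τ ⬝ᵥ F₁ τ + v₂ τ ⬝ᵥ Fnull τ)) ≥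
        -((1 : ℝ) / 2 * (x1' 0 ⬝ᵥ (M 0).mulVec (x1' 0))) -
          (1 : ℝ) / 2 * (xt 0) ^ 2 - (1 : ℝ) / 2 * (v₂ 0 ⬝ᵥ v₂ 0) := by
  intro t ht
  have hH : ∀ s, HasDerivAt (fun s => 1 / 2 * (x1' s ⬝ᵥ (M s).mulVec (x1' s)) +
      1 / 2 * xt s ^ 2 + 1 / 2 * (v₂ s ⬝ᵥ v₂ s))
      (x1' s ⬝ᵥ (M s).mulVec (x1'' s) + 1 / 2 * (x1' s ⬝ᵥ (M' s).mulVec (x1' s)) +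
        xt s * xt' s + v₂ s ⬝ᵥ v₂' s) s := fun s => by
    have hsymm : (M s).IsSymm := isHermitian_iff_isSymm.1 (hMpd s).isHermitian
    have h := (((hx1 s).dotProduct_mulVec_self (hM s) hsymm).const_mul (1 / 2)).add
      (((hxt s).pow 2).const_mul (1 / 2)) |>.add (((hv2 s).dotProduct_s1 (hv2 s)).const_mul (1 / 2))
    refine h.congr_deriv ?_
    rw [dotProduct_comm (v₂' s)]
    ring
  have hEP := fun s => storage_rate_le_supplied_power (hDpsd s) (hDNpsd s) (hψ s) (hdyn1 s)
    (hdyn2 s) (htank s) (hφ s) (hγ s)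
  have hHt : 0 ≤ 1 / 2 * (x1' t ⬝ᵥ (M t).mulVec (x1' t)) + 1 / 2 * xt t ^ 2 +
      1 / 2 * (v₂ t ⬝ᵥ v₂ t) := by
    have h₁ := (hMpd t).posSemidef.dotProduct_mulVec_nonneg (x1' t)
    have h₂ := dotProduct_star_self_nonneg (v₂ t)
    simp only [star_trivial] at h₁ h₂
    positivity
  have := neg_le_integral_of_hasDerivAt_le_s1 ht hH hEP (hcont.intervalIntegrable 0 t) hHt
  linarith

/-- Proposition 2: passivity of the tank-based variable admittance controller
augmented with the null-space energy-harvesting dynamics, with respect to the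
pairs `(F₁, ẋ₁)` and `(F_null, v₂)`. -/
theorem tank_admittance_nullspace_passive
    (m₁ m₂ : ℕ) (hm₁ : 0 < m₁) (hm₂ : 0 < m₂)
    (x1' x1'' F₁ : ℝ → Fin m₁ → ℝ)
    (v₂ v₂' Fnull : ℝ → Fin m₂ → ℝ)
    (xt xt' : ℝ → ℝ)
    (M M' D : ℝ → Matrix (Fin m₁) (Fin m₁) ℝ)
    (DN : ℝ → Matrix (Fin m₂) (Fin m₂) ℝ)
    (ψ φ γ : ℝ → ℝ)
    (hx1 : ∀ t, HasDerivAt x1' (x1'' t) t)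
    (hv2 : ∀ t, HasDerivAt v₂ (v₂' t) t)
    (hxt : ∀ t, HasDerivAt xt (xt' t) t)
    (hM : ∀ t i j, HasDerivAt (fun s => M s i j) (M' t i j) t)
    (hMpd : ∀ t, (M t).PosDef)
    (hDpsd : ∀ t, (D t).PosSemidef)
    (hDNpsd : ∀ t, (DN t).PosSemidef)
    (hψ : ∀ t, 0 ≤ ψ t)
    (hdyn1 : ∀ t, (M t).mulVec (x1'' t) +
      (D t + ψ t • (1 : Matrix (Fin m₁) (Fin m₁) ℝ)).mulVec (x1' t) = F₁ t)
    (hdyn2 : ∀ t, v₂' t = -(DN t).mulVec (v₂ t) + Fnull t)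
    (htank : ∀ t, xt t * xt' t =
      φ t * ((x1' t ⬝ᵥ (D t).mulVec (x1' t)) + (v₂ t ⬝ᵥ (DN t).mulVec (v₂ t))) -
        γ t * ((1 : ℝ) / 2 * (x1' t ⬝ᵥ (M' t).mulVec (x1' t))))
    (hφ : ∀ t, φ t = 0 ∨ φ t = 1)
    (hγ : ∀ t, γ t = 1 ∨ (γ t = 0 ∧ (-(M' t)).PosSemidef))
    (hcont : Continuous fun t => x1' t ⬝ᵥ F₁ t + v₂ t ⬝ᵥ Fnull t) :
    ∀ t ≥ (0 : ℝ),
      (∫ τ in (0 : ℝ)..t, (x1' τ ⬝ᵥ F₁ τ + v₂ τ ⬝ᵥ Fnull τ)) ≥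
        -((1 : ℝ) / 2 * (x1' 0 ⬝ᵥ (M 0).mulVec (x1' 0))) -
          (1 : ℝ) / 2 * (xt 0) ^ 2 - (1 : ℝ) / 2 * (v₂ 0 ⬝ᵥ v₂ 0) :=
  tank_admittance_nullspace_passive_general m₁ m₂ x1' x1'' F₁ v₂ v₂' Fnull xt xt' M M' D DN ψ φ γ
    hx1 hv2 hxt hM hMpd hDpsd hDNpsd hψ hdyn1 hdyn2 htank hφ hγ hcont
end
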